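/- Let 𝒜 be an almost disjoint family on ω, let C ⊆ ω, let ℬ = {A ∈ 𝒜 : A ∩ C is infinite}, let D be a partitioner for 𝒜 with B ⊆* D for every B ∈ ℬ and A ∩ D finite for every A ∈ 𝒜 \ ℬ, let F ⊆ Ψ(𝒜) be a closed set disjoint from the regular closed set K = C ∪ ℬ, and set E = F ∩ ω. Then U = (ℬ ∪ C ∪ D) \ E is a clopen subset of Ψ(𝒜) containing K and disjoint from F. -/
import Mathlib


open Set

/-- `A ⊆* D`: `A \ D` is finite. -/
def AlmostSubset (A D : Set ℕ) : Prop := (A \ D).Finite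

/-- An almost disjoint family: a family of infinite subsets of `ℕ` any two distinct
members of which have finite intersection. -/
def AlmostDisjointFam (𝒜 : Set (Set ℕ)) : Prop :=
  (∀ A ∈ 𝒜, A.Infinite) ∧ ∀ A ∈ 𝒜, ∀ B ∈ 𝒜, A ≠ B → (A ∩ B).Finite

/-- A maximal almost disjoint (MAD) family. -/
def MADFam (𝒜 : Set (Set ℕ)) : Prop :=
  AlmostDisjointFam 𝒜 ∧ ∀ X : Set ℕ, X.Infinite → ∃ A ∈ 𝒜, (A ∩ X).Infinite

/-- `D` is a partitioner for the family `𝒜`. -/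
def IsPartitioner (𝒜 : Set (Set ℕ)) (D : Set ℕ) : Prop :=
  ∀ A ∈ 𝒜, AlmostSubset A D ∨ (A ∩ D).Finite

/-- The topology of the Ψ-space `Ψ(𝒜)` on the set `ℕ ⊕ ↥𝒜`: points of `ℕ` are isolated
and the sets `{A} ∪ (A \ F)`, `F` finite, form a neighbourhood base at `A ∈ 𝒜`. -/
def psiTop (𝒜 : Set (Set ℕ)) : TopologicalSpace (ℕ ⊕ ↥𝒜) where
  IsOpen U := ∀ A : ↥𝒜, Sum.inr A ∈ U → ((A : Set ℕ) \ {n | Sum.inl n ∈ U}).Finite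
  isOpen_univ := by intro A _; simp
  isOpen_inter := by
    intro U V hU hV A hA
    apply ((hU A hA.1).union (hV A hA.2)).subset
    rintro n ⟨hnA, hn⟩
    by_cases hU' : Sum.inl n ∈ U
    · exact Or.inr ⟨hnA, fun hV' => hn ⟨hU', hV'⟩⟩
    · exact Or.inl ⟨hnA, hU'⟩
  isOpen_sUnion := by
    intro S hS A hA
    obtain ⟨U, hU, hAU⟩ := Set.mem_sUnion.mp hA
    apply (hS U hU A hAU).subset
    rintro n ⟨hnA, hn⟩
    exact ⟨hnA, fun h => hn (Set.mem_sUnion.mpr ⟨U, hU, h⟩)⟩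

/-- A set is regular closed if it is the closure of its interior. -/
def IsRegClosed {X : Type*} [TopologicalSpace X] (K : Set X) : Prop :=
  closure (interior K) = K

/-- A set is π-closed if it is a finite intersection of regular closed sets. -/
def IsPiClosed {X : Type*} [TopologicalSpace X] (K : Set X) : Prop :=
  ∃ (n : ℕ) (f : Fin n → Set X), (∀ i, IsRegClosed (f i)) ∧ K = ⋂ i, f i

/-- A space is almost-normal if any two disjoint closed sets, one of which is regular
closed, can be separated by disjoint open sets. -/
def AlmostNormalSp (X : Type*) [TopologicalSpace X] : Prop :=
  ∀ C K : Set X, IsClosed C → IsClosed K → IsRegClosed K → Disjoint C K →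
    ∃ U V : Set X, IsOpen U ∧ IsOpen V ∧ C ⊆ U ∧ K ⊆ V ∧ Disjoint U V

/-- A space is partly-normal if any two disjoint closed sets, one regular closed and the
other π-closed, can be separated by disjoint open sets. -/
def PartlyNormalSp (X : Type*) [TopologicalSpace X] : Prop :=
  ∀ K₀ K₁ : Set X, IsRegClosed K₀ → IsPiClosed K₁ → Disjoint K₀ K₁ →
    ∃ U V : Set X, IsOpen U ∧ IsOpen V ∧ K₀ ⊆ U ∧ K₁ ⊆ V ∧ Disjoint U V

/-- A space is quasi-normal if any two disjoint π-closed sets can be separated by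
disjoint open sets. -/
def QuasiNormalSp (X : Type*) [TopologicalSpace X] : Prop :=
  ∀ K₀ K₁ : Set X, IsPiClosed K₀ → IsPiClosed K₁ → Disjoint K₀ K₁ →
    ∃ U V : Set X, IsOpen U ∧ IsOpen V ∧ K₀ ⊆ U ∧ K₁ ⊆ V ∧ Disjoint U V

/-- `D^0 = D` and `D^1 = ℕ \ D`. -/
def boolPart (D : Set ℕ) : Bool → Set ℕ
  | false => D
  | true => Dᶜ

/-- Two sets are equal modulo a finite set. -/
def EqModFin (X Y : Set ℕ) : Prop := ((X \ Y) ∪ (Y \ X)).Finite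

/-- A nice family of partitioners for `𝒜`. -/
def NiceFamily (𝒜 𝒟 : Set (Set ℕ)) : Prop :=
  (∀ D ∈ 𝒟, IsPartitioner 𝒜 D) ∧
  ∀ (n : ℕ) (Ds : Fin n → Set ℕ), (∀ i, Ds i ∈ 𝒟) → ∀ f : Fin n → Bool,
    {A | A ∈ 𝒜 ∧ AlmostSubset A (⋂ i, boolPart (Ds i) (f i))}.Finite →
    EqModFin (⋂ i, boolPart (Ds i) (f i))
      (⋃₀ {A | A ∈ 𝒜 ∧ AlmostSubset A (⋂ i, boolPart (Ds i) (f i))})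

/-- `𝒜` is strongly ℵ₀-separated. -/
def StronglyAleph0Separated (𝒜 : Set (Set ℕ)) : Prop :=
  ∀ ℬ 𝒞 : Set (Set ℕ), ℬ ⊆ 𝒜 → 𝒞 ⊆ 𝒜 → ℬ.Countable → 𝒞.Countable → Disjoint ℬ 𝒞 →
    ∃ D : Set ℕ, IsPartitioner 𝒜 D ∧ (∀ B ∈ ℬ, AlmostSubset B D) ∧
      ∀ C ∈ 𝒞, (C ∩ D).Finite

/-- `𝒜` is weakly separated. -/
def WeaklySeparated (𝒜 : Set (Set ℕ)) : Prop :=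
  ∀ ℬ 𝒞 : Set (Set ℕ), ℬ ⊆ 𝒜 → 𝒞 ⊆ 𝒜 → Disjoint ℬ 𝒞 →
    ∃ D : Set ℕ, D.Infinite ∧ (∀ B ∈ ℬ, (D ∩ B).Infinite) ∧ ∀ C ∈ 𝒞, (D ∩ C).Finite

/-- If `D` is a partitioner separating `ℬ = {A ∈ 𝒜 : A ∩ C infinite}` from
`𝒜 \ ℬ`, `K = C ∪ ℬ` is the regular closed set determined by `C`, and `F` is a closed set
disjoint from `K` with `E = F ∩ ω`, then `U = (ℬ ∪ C ∪ D) \ E` is a clopen set containing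
`K` and disjoint from `F`. -/
theorem statement16 (𝒜 : Set (Set ℕ)) (h𝒜 : AlmostDisjointFam 𝒜) (C D : Set ℕ)
    (hD : IsPartitioner 𝒜 D)
    (hBD : ∀ A ∈ 𝒜, (A ∩ C).Infinite → AlmostSubset A D)
    (hCD : ∀ A ∈ 𝒜, (A ∩ C).Finite → (A ∩ D).Finite)
    (F : Set (ℕ ⊕ ↥𝒜)) (hF : @IsClosed (ℕ ⊕ ↥𝒜) (psiTop 𝒜) F)
    (hdisj : Disjoint F
      (Sum.inl '' C ∪ Sum.inr '' {A : ↥𝒜 | ((A : Set ℕ) ∩ C).Infinite})) :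
    @IsOpen (ℕ ⊕ ↥𝒜) (psiTop 𝒜)
        (Sum.inl '' ((C ∪ D) \ {n | Sum.inl n ∈ F}) ∪
          Sum.inr '' {A : ↥𝒜 | ((A : Set ℕ) ∩ C).Infinite}) ∧
      @IsClosed (ℕ ⊕ ↥𝒜) (psiTop 𝒜)
        (Sum.inl '' ((C ∪ D) \ {n | Sum.inl n ∈ F}) ∪
          Sum.inr '' {A : ↥𝒜 | ((A : Set ℕ) ∩ C).Infinite}) ∧
      (Sum.inl '' C ∪ Sum.inr '' {A : ↥𝒜 | ((A : Set ℕ) ∩ C).Infinite}) ⊆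
        (Sum.inl '' ((C ∪ D) \ {n | Sum.inl n ∈ F}) ∪
          Sum.inr '' {A : ↥𝒜 | ((A : Set ℕ) ∩ C).Infinite}) ∧
      Disjoint
        (Sum.inl '' ((C ∪ D) \ {n | Sum.inl n ∈ F}) ∪
          Sum.inr '' {A : ↥𝒜 | ((A : Set ℕ) ∩ C).Infinite}) F := by
  set E : Set ℕ := {n | Sum.inl n ∈ F} with hE
  have hAE : ∀ A : ↥𝒜, ((A : Set ℕ) ∩ C).Infinite → ((A : Set ℕ) ∩ E).Finite := by
    intro A hAC
    have hAF : Sum.inr A ∉ F := fun h =>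
      (hdisj.ne_of_mem h (Or.inr ⟨A, hAC, rfl⟩)) rfl
    have h := hF.isOpen_compl A hAF
    apply h.subset
    rintro n ⟨hnA, hnE⟩
    exact ⟨hnA, fun hc => hc hnE⟩
  refine ⟨?_, ?_, ?_, ?_⟩
  · -- open
    intro A hA
    have hAC : ((A : Set ℕ) ∩ C).Infinite := by
      rcases hA with ⟨n, _, hn⟩ | ⟨B, hB, hBA⟩
      · exact absurd hn (by simp)
      · cases hBA; exact hB
    have h1 := hBD A A.2 hAC
    have h2 := hAE A hAC
    apply (h1.union h2).subset
    rintro n ⟨hnA, hn⟩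
    by_cases hnE : n ∈ E
    · exact Or.inr ⟨hnA, hnE⟩
    · exact Or.inl ⟨hnA, fun hnD => hn (Or.inl ⟨n, ⟨Or.inr hnD, hnE⟩, rfl⟩)⟩
  · -- closed : complement open
    rw [← @isOpen_compl_iff _ _ (psiTop 𝒜)]
    intro A hA
    have hAC : ((A : Set ℕ) ∩ C).Finite := by
      by_contra hinf
      exact hA (Or.inr ⟨A, hinf, rfl⟩)
    have h1 := hCD A A.2 hAC
    apply (hAC.union h1).subset
    rintro n ⟨hnA, hn⟩
    have hnU : Sum.inl n ∈
        (Sum.inl '' ((C ∪ D) \ {n | Sum.inl n ∈ F}) ∪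
          Sum.inr '' {A : ↥𝒜 | ((A : Set ℕ) ∩ C).Infinite}) := by
      by_contra hc
      exact hn hc
    rcases hnU with ⟨m, ⟨hmCD, _⟩, hm⟩ | ⟨B, _, hB⟩
    · cases hm
      rcases hmCD with h | h
      · exact Or.inl ⟨hnA, h⟩
      · exact Or.inr ⟨hnA, h⟩
    · exact absurd hB (by simp)
  · -- subset
    rintro x (⟨n, hn, rfl⟩ | hx)
    · refine Or.inl ⟨n, ⟨Or.inl hn, fun hnF => ?_⟩, rfl⟩
      exact (hdisj.ne_of_mem hnF (Or.inl ⟨n, hn, rfl⟩)) rfl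
    · exact Or.inr hx
  · -- disjoint
    rw [Set.disjoint_left]
    rintro x (⟨n, ⟨_, hnE⟩, rfl⟩ | ⟨A, hA, rfl⟩) hxF
    · exact hnE hxF
    · exact (hdisj.ne_of_mem hxF (Or.inr ⟨A, hA, rfl⟩)) rfl
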